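/- arXiv:1312.5042 — 4 statements merged into one kernel-verified Lean document; each statement's English description precedes it below -/
import Mathlib

section
/- For every x ∈ ℝ, cot(πx) = 1/(πx) + (2x/π) ∑_{i=1}^∞ 1/(x² - i²), where x is not an integer. -/
/-! Mathlib's Mittag-Leffler expansion `π cot(πx) = 1/x + ∑ₙ (1/(x - n) + 1/(x + n))`, derived
from Euler's sine product, holds for every complex non-integer `x`; pairing the terms as
`2x / (x² - n²)` and restricting to real `x` gives the formula. -/

open Real

theorem Complex.cot_pi_mul_eq_one_div_add_tsum {x : ℂ} (hx : x ∈ Complex.integerComplement) :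
    Complex.cot (π * x) = 1 / (π * x) + 2 * x / π * ∑' n : ℕ, 1 / (x ^ 2 - ((n : ℂ) + 1) ^ 2) := by
  have hπ : (π : ℂ) ≠ 0 := Complex.ofReal_ne_zero.mpr pi_ne_zero
  have hterm (n : ℕ) : cotTerm x n = 2 * x * (1 / (x ^ 2 - ((n : ℂ) + 1) ^ 2)) := by
    rw [cotTerm_identity hx n]
    ring_nf
  have hseries : π * Complex.cot (π * x) - 1 / x =
      2 * x * ∑' n : ℕ, 1 / (x ^ 2 - ((n : ℂ) + 1) ^ 2) := by
    rw [cot_series_rep' hx, ← tsum_mul_left]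
    exact tsum_congr hterm
  rw [div_mul_eq_mul_div, ← hseries]
  field_simp
  ring

/-- Partial fraction expansion of the cotangent:
for every non-integer real `x`,
`cot(πx) = 1/(πx) + (2x/π) ∑_{i=1}^∞ 1/(x² - i²)`. -/
theorem stmt1 (x : ℝ) (hx : ∀ n : ℤ, x ≠ (n : ℝ)) :
    Real.cot (Real.pi * x) =
      1 / (Real.pi * x) +
        (2 * x / Real.pi) * ∑' i : ℕ, 1 / (x ^ 2 - ((i : ℝ) + 1) ^ 2) := by
  have hxC : (x : ℂ) ∈ Complex.integerComplement := by
    rintro ⟨n, hn⟩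
    exact hx n (by exact_mod_cast hn.symm)
  apply Complex.ofReal_injective
  push_cast [Complex.ofReal_cot, Complex.ofReal_tsum]
  exact Complex.cot_pi_mul_eq_one_div_add_tsum hxC
end

section
/- Let ρ : ℝ → [0,∞) satisfy ρ(z)=ρ(-z), ρ(z)=0 for |z|≤1, and ∫_{|z|>1}|z|^δ ρ(z)dz < ∞ for some δ ∈ (0,1]. Let φ satisfy |φ(x)-φ(y)| ≤ C|x-y|^δ for |x-y| ≥ 1, and let f be bounded measurable with compact support. Then ∫∫_{|x-y|>1} |f(x)-f(y)| |φ(x)-φ(y)| ρ(x-y) dx dy < ∞ and -∫ f(x) Aφ(x) dx = (1/2) ∫∫_{|x-y|>1} (f(x)-f(y))(φ(x)-φ(y)) ρ(x-y) dx dy, where Aφ(x) = ∫_{|z|>1}(φ(x+z)-φ(x))ρ(z)dz. -/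
/-!
Since `|φ(x + z) - φ(x)| ρ(z) ≤ C |z|^δ ρ(z)` and `f ∈ L¹`, Fubini writes `∫ f Aφ` as a double
integral, and the shear `(x, z) ↦ (x, x + z)` turns it into `∫∫ f(x) (φ(y) - φ(x)) ρ(y - x)`.
By the symmetry of `ρ`, exchanging `x` and `y` gives the same value with the roles of `f(x)` and
`f(y)` swapped, and averaging the two expressions gives
`-(1/2) ∫∫ (f(x) - f(y)) (φ(x) - φ(y)) ρ(x - y)`.
As `ρ` vanishes on `|z| ≤ 1`, the truncations to `|z| > 1` and `|x - y| > 1` change nothing.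
-/

open MeasureTheory Set

lemma sub_mul_sub_mul_eq_neg_add {G : Type*} [AddCommGroup G] {k φ f : G → ℝ}
    (hk : ∀ z, k (-z) = k z) (x y : G) :
    (f x - f y) * (φ x - φ y) * k (x - y) =
      -(f x * ((φ y - φ x) * k (y - x)) + f y * ((φ x - φ y) * k (x - y))) := by
  rw [← neg_sub x y, hk]
  ring

section NonlocalOperator

variable {G : Type*} [MeasurableSpace G] [AddCommGroup G] [MeasurableAdd₂ G]
  {μ : Measure G} {k φ f : G → ℝ}

noncomputable def nonlocalOp (μ : Measure G) (k φ : G → ℝ) (x : G) : ℝ :=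
  ∫ z, (φ (x + z) - φ x) * k z ∂μ

lemma integrable_prod_of_abs_sub_mul_le [SFinite μ] {w : G → ℝ} (hf : Integrable f μ)
    (hw : Integrable w μ) (hfm : Measurable f) (hφm : Measurable φ) (hkm : Measurable k)
    (hk : ∀ z, 0 ≤ k z) (hle : ∀ x z, |φ (x + z) - φ x| * k z ≤ w z) :
    Integrable (fun p : G × G => f p.1 * ((φ (p.1 + p.2) - φ p.1) * k p.2)) (μ.prod μ) := by
  refine (hf.abs.mul_prod hw).mono' (by fun_prop) (ae_of_all _ fun p => ?_)
  rw [Real.norm_eq_abs, abs_mul, abs_mul, abs_of_nonneg (hk p.2)]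
  exact mul_le_mul_of_nonneg_left (hle p.1 p.2) (abs_nonneg _)

variable [MeasurableNeg G] [SFinite μ] [μ.IsAddLeftInvariant]

lemma integrable_comp_prod_add_iff {E : Type*} [NormedAddCommGroup E] {u : G × G → E} :
    Integrable (fun p => u (p.1, p.1 + p.2)) (μ.prod μ) ↔ Integrable u (μ.prod μ) :=
  (measurePreserving_prod_add μ μ).integrable_comp_emb
    (MeasurableEquiv.shearAddRight G).measurableEmbedding

lemma integral_comp_prod_add {E : Type*} [NormedAddCommGroup E] [NormedSpace ℝ E]
    (u : G × G → E) : ∫ p, u (p.1, p.1 + p.2) ∂(μ.prod μ) = ∫ p, u p ∂(μ.prod μ) :=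
  (measurePreserving_prod_add μ μ).integral_comp
    (MeasurableEquiv.shearAddRight G).measurableEmbedding u

lemma integrable_sub_mul_sub_mul (hk : ∀ z, k (-z) = k z)
    (hg : Integrable (fun p : G × G => f p.1 * ((φ (p.1 + p.2) - φ p.1) * k p.2)) (μ.prod μ)) :
    Integrable (fun p : G × G => (f p.1 - f p.2) * (φ p.1 - φ p.2) * k (p.1 - p.2)) (μ.prod μ) := by
  have hu : Integrable (fun p : G × G => f p.1 * ((φ p.2 - φ p.1) * k (p.2 - p.1))) (μ.prod μ) :=
    integrable_comp_prod_add_iff.1 (by simpa only [add_sub_cancel_left] using hg)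
  exact (hu.add hu.swap).neg.congr
    (ae_of_all _ fun p => (sub_mul_sub_mul_eq_neg_add hk p.1 p.2).symm)

theorem integral_mul_nonlocalOp (hk : ∀ z, k (-z) = k z)
    (hg : Integrable (fun p : G × G => f p.1 * ((φ (p.1 + p.2) - φ p.1) * k p.2)) (μ.prod μ)) :
    ∫ x, f x * nonlocalOp μ k φ x ∂μ =
      -(1 / 2) * ∫ p, (f p.1 - f p.2) * (φ p.1 - φ p.2) * k (p.1 - p.2) ∂(μ.prod μ) := by
  set u : G × G → ℝ := fun p => f p.1 * ((φ p.2 - φ p.1) * k (p.2 - p.1))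
  have hu : Integrable u (μ.prod μ) :=
    integrable_comp_prod_add_iff.1 (by simpa only [u, add_sub_cancel_left] using hg)
  have hfubini : ∫ x, f x * nonlocalOp μ k φ x ∂μ = ∫ p, u p ∂(μ.prod μ) := by
    simp_rw [nonlocalOp, ← integral_const_mul]
    rw [integral_integral (f := fun x z => f x * ((φ (x + z) - φ x) * k z)) hg,
      ← integral_comp_prod_add u]
    simp only [u, add_sub_cancel_left]
  have hu_swap : Integrable (fun p => u p.swap) (μ.prod μ) := hu.swap
  have hswap : ∫ p, u p.swap ∂(μ.prod μ) = ∫ p, u p ∂(μ.prod μ) := integral_prod_swap u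
  calc ∫ x, f x * nonlocalOp μ k φ x ∂μ
      = -(1 / 2) * -(∫ p, u p ∂(μ.prod μ) + ∫ p, u p.swap ∂(μ.prod μ)) := by
        rw [hfubini, hswap]; ring
    _ = -(1 / 2) * ∫ p, (f p.1 - f p.2) * (φ p.1 - φ p.2) * k (p.1 - p.2) ∂(μ.prod μ) := by
        rw [← integral_add hu hu_swap, ← integral_neg]
        exact congrArg _ (integral_congr_ae (ae_of_all _ fun p =>
          (sub_mul_sub_mul_eq_neg_add hk p.1 p.2).symm))

end NonlocalOperator

lemma integrable_of_bounded_of_hasCompactSupport {X E : Type*} [TopologicalSpace X]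
    [MeasurableSpace X] [OpensMeasurableSpace X] {μ : Measure X} [IsFiniteMeasureOnCompacts μ]
    [NormedAddCommGroup E] {f : X → E} {M : ℝ} (hf : AEStronglyMeasurable f μ)
    (hM : ∀ x, ‖f x‖ ≤ M) (hfs : HasCompactSupport f) : Integrable f μ :=
  (integrableOn_iff_integrable_of_support_subset (subset_tsupport f)).1
    (Measure.integrableOn_of_bounded hfs.measure_lt_top.ne hf (ae_of_all _ hM))

lemma abs_sub_mul_le_mul_norm_rpow_mul {E : Type*} [SeminormedAddCommGroup E] {k φ : E → ℝ}
    {C δ : ℝ} (hk : ∀ z, 0 ≤ k z) (hk_small : ∀ z, ‖z‖ ≤ 1 → k z = 0)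
    (hφ : ∀ x y, 1 ≤ ‖x - y‖ → |φ x - φ y| ≤ C * ‖x - y‖ ^ δ) (x z : E) :
    |φ (x + z) - φ x| * k z ≤ C * (‖z‖ ^ δ * k z) := by
  rcases le_or_gt ‖z‖ 1 with hz | hz
  · simp [hk_small z hz]
  · have := hφ (x + z) x (by simpa using hz.le)
    rw [add_sub_cancel_left] at this
    rw [← mul_assoc]
    exact mul_le_mul_of_nonneg_right this (hk z)

theorem stmt5_general (ρ φ f : ℝ → ℝ) (C δ : ℝ)
    (hρmeas : Measurable ρ) (hρpos : ∀ z, 0 ≤ ρ z) (hρsymm : ∀ z, ρ (-z) = ρ z)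
    (hρvan : ∀ z : ℝ, |z| ≤ 1 → ρ z = 0)
    (hρint : IntegrableOn (fun z : ℝ => |z| ^ δ * ρ z) {z : ℝ | 1 < |z|})
    (hφmeas : Measurable φ)
    (hφ : ∀ x y : ℝ, 1 ≤ |x - y| → |φ x - φ y| ≤ C * |x - y| ^ δ)
    (hfmeas : Measurable f) (hfbdd : ∃ M : ℝ, ∀ x, |f x| ≤ M)
    (hfsupp : HasCompactSupport f) :
    IntegrableOn
        (fun p : ℝ × ℝ => |f p.1 - f p.2| * |φ p.1 - φ p.2| * ρ (p.1 - p.2))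
        {p : ℝ × ℝ | 1 < |p.1 - p.2|} ∧
      -∫ x : ℝ, f x * ∫ z in {z : ℝ | 1 < |z|}, (φ (x + z) - φ x) * ρ z =
        (1 / 2) * ∫ p in {p : ℝ × ℝ | 1 < |p.1 - p.2|},
          (f p.1 - f p.2) * (φ p.1 - φ p.2) * ρ (p.1 - p.2) := by
  obtain ⟨M, hM⟩ := hfbdd
  have hw : Integrable (fun z : ℝ => |z| ^ δ * ρ z) := by
    refine (integrableOn_iff_integrable_of_support_subset fun z hz => ?_).1 hρint
    exact not_le.1 fun h => Function.mem_support.1 hz (by rw [hρvan z h, mul_zero])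
  have hf : Integrable f :=
    integrable_of_bounded_of_hasCompactSupport hfmeas.aestronglyMeasurable hM hfsupp
  have hg := integrable_prod_of_abs_sub_mul_le hf (hw.const_mul C) hfmeas hφmeas hρmeas hρpos
    (abs_sub_mul_le_mul_norm_rpow_mul hρpos hρvan hφ)
  have hA (x : ℝ) : ∫ z in {z : ℝ | 1 < |z|}, (φ (x + z) - φ x) * ρ z = nonlocalOp volume ρ φ x :=
    setIntegral_eq_integral_of_forall_compl_eq_zero fun z hz => by simp [hρvan z (not_lt.1 hz)]
  have hfar : ∫ p in {p : ℝ × ℝ | 1 < |p.1 - p.2|},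
      (f p.1 - f p.2) * (φ p.1 - φ p.2) * ρ (p.1 - p.2) =
      ∫ p : ℝ × ℝ, (f p.1 - f p.2) * (φ p.1 - φ p.2) * ρ (p.1 - p.2) :=
    setIntegral_eq_integral_of_forall_compl_eq_zero fun p hp => by simp [hρvan _ (not_lt.1 hp)]
  refine ⟨?_, ?_⟩
  · refine (integrable_sub_mul_sub_mul hρsymm hg).abs.integrableOn.congr_fun (fun p _ => ?_)
      (measurableSet_lt measurable_const (by fun_prop))
    simp only [abs_mul, abs_of_nonneg (hρpos _)]
  · simp_rw [hA]
    rw [hfar, Measure.volume_eq_prod, integral_mul_nonlocalOp hρsymm hg]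
    ring

/-- Integration by parts formula for the nonlocal operator
`Aφ(x) = ∫_{|z|>1} (φ(x+z) - φ(x)) ρ(z) dz` with truncated symmetric kernel `ρ`:
for `f` bounded measurable with compact support,
`∫∫_{|x-y|>1} |f(x)-f(y)||φ(x)-φ(y)| ρ(x-y) dx dy < ∞` and
`-∫ f(x) Aφ(x) dx = (1/2) ∫∫_{|x-y|>1} (f(x)-f(y))(φ(x)-φ(y)) ρ(x-y) dx dy`. -/
theorem stmt5 (ρ φ f : ℝ → ℝ) (C δ : ℝ) (hδ : δ ∈ Set.Ioc (0 : ℝ) 1)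
    (hρmeas : Measurable ρ) (hρpos : ∀ z, 0 ≤ ρ z) (hρsymm : ∀ z, ρ (-z) = ρ z)
    (hρvan : ∀ z : ℝ, |z| ≤ 1 → ρ z = 0)
    (hρint : IntegrableOn (fun z : ℝ => |z| ^ δ * ρ z) {z : ℝ | 1 < |z|})
    (hφmeas : Measurable φ)
    (hφ : ∀ x y : ℝ, 1 ≤ |x - y| → |φ x - φ y| ≤ C * |x - y| ^ δ)
    (hfmeas : Measurable f) (hfbdd : ∃ M : ℝ, ∀ x, |f x| ≤ M)
    (hfsupp : HasCompactSupport f) :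
    IntegrableOn
        (fun p : ℝ × ℝ => |f p.1 - f p.2| * |φ p.1 - φ p.2| * ρ (p.1 - p.2))
        {p : ℝ × ℝ | 1 < |p.1 - p.2|} ∧
      -∫ x : ℝ, f x * ∫ z in {z : ℝ | 1 < |z|}, (φ (x + z) - φ x) * ρ z =
        (1 / 2) * ∫ p in {p : ℝ × ℝ | 1 < |p.1 - p.2|},
          (f p.1 - f p.2) * (φ p.1 - φ p.2) * ρ (p.1 - p.2) :=
  stmt5_general ρ φ f C δ hρmeas hρpos hρsymm hρvan hρint hφmeas hφ hfmeas hfbdd hfsupp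
end

section
/- For α ∈ (1,2) and θ ∈ (0,1), define E(α,θ) = 2/(α-θ) + 2α ∑_{i=1}^∞ [(θ-1)(θ-2)⋯(θ-2i+1)/(2i)!] · (1/(2i-α) + 1/(2i+α-θ)). Then the series converges absolutely and lim_{θ → 0⁺} E(α,θ) = π cot(πα/2). -/
/-!
Since `|θ - j| ≤ j` for `θ ∈ [0, 2]`, the product `(θ-1)(θ-2)⋯(θ-2i+1)` is at most `(2i-1)!` in
absolute value, so the `i`-th term of the series is `O(1/i²)` uniformly in `θ ∈ [0, 1]`. This gives
absolute convergence and, by dominated convergence (Tannery's theorem), lets `θ → 0⁺` be taken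
termwise. At `θ = 0` the product is `-(2i-1)!`, and `2α` times the `i`-th term collapses to
`1/(α/2 - i) + 1/(α/2 + i)`; together with `2/α` these are exactly the terms of the partial
fraction expansion of `π cot(πα/2)`.
-/

open Real Filter
open scoped Nat

theorem Real.cot_series_rep' {x : ℝ} (hx : ∀ n : ℤ, (n : ℝ) ≠ x) :
    π * cot (π * x) - 1 / x = ∑' n : ℕ, (1 / (x - (n + 1)) + 1 / (x + (n + 1))) := by
  have hxC : (x : ℂ) ∈ Complex.integerComplement := by
    rintro ⟨n, hn⟩
    exact hx n (by exact_mod_cast hn)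
  apply Complex.ofReal_injective
  push_cast [Complex.ofReal_tsum, Complex.ofReal_cot]
  exact _root_.cot_series_rep' hxC

open Finset in
theorem abs_prod_range_sub_succ_le_factorial {θ : ℝ} (hθ : θ ∈ Set.Icc 0 2) (n : ℕ) :
    |∏ j ∈ range n, (θ - ((j : ℝ) + 1))| ≤ n ! := by
  rw [abs_prod, ← prod_range_add_one_eq_factorial, Nat.cast_prod]
  refine prod_le_prod (fun _ _ => abs_nonneg _) fun j _ => abs_le.2 ⟨?_, ?_⟩ <;> push_cast
  · linarith [hθ.1]
  · linarith [hθ.2, (j.cast_nonneg : (0 : ℝ) ≤ j)]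

open Finset in
theorem prod_range_zero_sub_succ (n : ℕ) :
    ∏ j ∈ range n, ((0 : ℝ) - ((j : ℝ) + 1)) = (-1) ^ n * n ! := by
  induction n with
  | zero => simp
  | succ n ih =>
    rw [prod_range_succ, ih, Nat.factorial_succ]
    push_cast
    ring

theorem cast_factorial_two_mul_succ (i : ℕ) :
    ((2 * (i + 1)) ! : ℝ) = 2 * ((i : ℝ) + 1) * (2 * i + 1) ! := by
  rw [show 2 * (i + 1) = 2 * i + 1 + 1 by ring, Nat.factorial_succ]
  push_cast
  ring

/-- The summand of `E(α, θ)` with index shifted by one: `eTerm α θ i` is the paper's term `i + 1`. -/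
noncomputable def eTerm (α θ : ℝ) (i : ℕ) : ℝ :=
  (∏ j ∈ Finset.range (2 * i + 1), (θ - ((j : ℝ) + 1))) / ((2 * (i + 1)).factorial : ℝ) *
    (1 / (2 * ((i : ℝ) + 1) - α) + 1 / (2 * ((i : ℝ) + 1) + α - θ))

theorem abs_eTerm_le {α θ : ℝ} (hα₀ : 0 ≤ α) (hα₂ : α < 2) (hθ : θ ∈ Set.Icc 0 1) (i : ℕ) :
    |eTerm α θ i| ≤ (1 / (2 - α) + 1) / 2 * (1 / ((i : ℝ) + 1) ^ 2) := by
  obtain ⟨hθ₀, hθ₁⟩ := hθ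
  rw [eTerm, abs_mul, abs_div, Nat.abs_cast]
  set k : ℝ := (i : ℝ) + 1
  have hk : 1 ≤ k := by simp [k]
  have hA : 0 < 2 * k - α := by linarith
  have hB : 0 < 2 * k + α - θ := by linarith
  have hprod : |∏ j ∈ Finset.range (2 * i + 1), (θ - ((j : ℝ) + 1))| / ((2 * (i + 1)) ! : ℝ)
      ≤ 1 / (2 * k) := by
    rw [cast_factorial_two_mul_succ]
    calc _ ≤ ((2 * i + 1) ! : ℝ) / (2 * k * (2 * i + 1) !) := by
          gcongr
          exact abs_prod_range_sub_succ_le_factorial ⟨hθ₀, by linarith⟩ _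
      _ = 1 / (2 * k) := by field_simp
  have hfirst : 1 / (2 * k - α) ≤ 1 / ((2 - α) * k) :=
    one_div_le_one_div_of_le (by nlinarith) (by nlinarith)
  have hsecond : 1 / (2 * k + α - θ) ≤ 1 / k := one_div_le_one_div_of_le (by linarith) (by linarith)
  rw [abs_of_pos (add_pos (one_div_pos.2 hA) (one_div_pos.2 hB))]
  calc _ ≤ 1 / (2 * k) * (1 / ((2 - α) * k) + 1 / k) :=
        mul_le_mul hprod (add_le_add hfirst hsecond) (by positivity) (by positivity)
    _ = (1 / (2 - α) + 1) / 2 * (1 / k ^ 2) := by field_simp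

theorem summable_one_div_succ_sq : Summable fun i : ℕ => 1 / ((i : ℝ) + 1) ^ 2 := by
  simpa using (summable_nat_add_iff 1).2 (Real.summable_one_div_nat_pow.2 one_lt_two)

theorem summable_abs_eTerm {α θ : ℝ} (hα₀ : 0 ≤ α) (hα₂ : α < 2) (hθ : θ ∈ Set.Icc 0 1) :
    Summable fun i => |eTerm α θ i| :=
  (summable_one_div_succ_sq.mul_left _).of_nonneg_of_le (fun _ => abs_nonneg _)
    (abs_eTerm_le hα₀ hα₂ hθ)

theorem continuousAt_eTerm {α θ : ℝ} {i : ℕ} (h : 2 * ((i : ℝ) + 1) + α - θ ≠ 0) :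
    ContinuousAt (fun θ => eTerm α θ i) θ := by
  unfold eTerm
  fun_prop (disch := assumption)

theorem tendsto_tsum_eTerm {α : ℝ} (hα₀ : 0 ≤ α) (hα₂ : α < 2) :
    Tendsto (fun θ => ∑' i, eTerm α θ i) (nhdsWithin 0 (Set.Ioi 0)) (nhds (∑' i, eTerm α 0 i)) := by
  refine tendsto_tsum_of_dominated_convergence
    (summable_one_div_succ_sq.mul_left ((1 / (2 - α) + 1) / 2))
    (fun i => (continuousAt_eTerm ?_).tendsto.mono_left nhdsWithin_le_nhds) ?_
  · have : (0 : ℝ) ≤ i := i.cast_nonneg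
    linarith
  · filter_upwards [Ioo_mem_nhdsGT (zero_lt_one' ℝ)] with θ hθ i
    exact abs_eTerm_le hα₀ hα₂ (Set.Ioo_subset_Icc_self hθ) i

theorem two_mul_mul_eTerm_zero {α : ℝ} (hα : ∀ n : ℤ, (n : ℝ) ≠ α / 2) (i : ℕ) :
    2 * α * eTerm α 0 i = 1 / (α / 2 - (i + 1)) + 1 / (α / 2 + (i + 1)) := by
  have hsub : α - 2 * ((i : ℝ) + 1) ≠ 0 := fun h => hα (i + 1) (by push_cast; linarith)
  have hadd : α + 2 * ((i : ℝ) + 1) ≠ 0 := fun h => hα (-(i + 1)) (by push_cast; linarith)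
  have hsub' : 2 * ((i : ℝ) + 1) - α ≠ 0 := fun h => hsub (by linarith)
  have hadd' : 2 * ((i : ℝ) + 1) + α ≠ 0 := fun h => hadd (by linarith)
  rw [eTerm, prod_range_zero_sub_succ, cast_factorial_two_mul_succ, sub_zero,
    (Odd.neg_one_pow ⟨i, rfl⟩ : (-1 : ℝ) ^ (2 * i + 1) = -1)]
  field_simp
  ring

theorem two_div_add_two_mul_tsum_eTerm_zero {α : ℝ} (hα : ∀ n : ℤ, (n : ℝ) ≠ α / 2) :
    2 / α + 2 * α * ∑' i, eTerm α 0 i = π * cot (π * α / 2) := by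
  rw [← tsum_mul_left, tsum_congr (two_mul_mul_eTerm_zero hα), mul_div_assoc,
    ← Real.cot_series_rep' hα, one_div_div]
  ring

/-- For `α ∈ (1,2)` and `θ ∈ (0,1)`, define
`E(α,θ) = 2/(α-θ) + 2α ∑_{i=1}^∞ [(θ-1)(θ-2)⋯(θ-2i+1)/(2i)!] (1/(2i-α) + 1/(2i+α-θ))`.
The series converges absolutely and `lim_{θ→0⁺} E(α,θ) = π cot(πα/2)`. -/
theorem stmt8 (α : ℝ) (hα : α ∈ Set.Ioo (1 : ℝ) 2) :
    (∀ θ ∈ Set.Ioo (0 : ℝ) 1,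
      Summable fun i : ℕ =>
        |(∏ j ∈ Finset.range (2 * i + 1), (θ - ((j : ℝ) + 1))) /
            ((2 * (i + 1)).factorial : ℝ) *
          (1 / (2 * ((i : ℝ) + 1) - α) + 1 / (2 * ((i : ℝ) + 1) + α - θ))|) ∧
      Filter.Tendsto
        (fun θ : ℝ =>
          2 / (α - θ) +
            2 * α *
              ∑' i : ℕ,
                (∏ j ∈ Finset.range (2 * i + 1), (θ - ((j : ℝ) + 1))) /
                    (((2 * (i + 1)).factorial : ℝ)) *
                  (1 / (2 * ((i : ℝ) + 1) - α) + 1 / (2 * ((i : ℝ) + 1) + α - θ)))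
        (nhdsWithin 0 (Set.Ioi 0))
        (nhds (Real.pi * Real.cot (Real.pi * α / 2))) := by
  obtain ⟨hα₁, hα₂⟩ := hα
  have hα₀ : 0 ≤ α := by linarith
  have hα_half : ∀ n : ℤ, (n : ℝ) ≠ α / 2 := by
    intro n hn
    have h₀ : (0 : ℝ) < n := by linarith
    have h₁ : (n : ℝ) < 1 := by linarith
    norm_cast at h₀ h₁
    omega
  refine ⟨fun θ hθ => summable_abs_eTerm hα₀ hα₂ (Set.Ioo_subset_Icc_self hθ), ?_⟩
  have hfirst : Tendsto (fun θ : ℝ => 2 / (α - θ)) (nhdsWithin 0 (Set.Ioi 0)) (nhds (2 / α)) := by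
    have hcont : ContinuousAt (fun θ : ℝ => 2 / (α - θ)) 0 :=
      continuousAt_const.div (continuousAt_const.sub continuousAt_id) (by rw [sub_zero]; linarith)
    simpa using hcont.tendsto.mono_left nhdsWithin_le_nhds
  rw [← two_div_add_two_mul_tsum_eTerm_zero hα_half]
  exact hfirst.add ((tendsto_tsum_eTerm hα₀ hα₂).const_mul _)
end

section
/- Let α ∈ (1,2), γ ∈ (1,α], and μ(dx) = C_γ(1+|x|)^{-γ}dx a probability measure on ℝ. Then there is no decreasing function β : (0,∞) → (0,∞) such that μ(f²) ≤ r E(f,f) + β(r) μ(|f|)² for all r > 0 and f in the form domain, where E is the α-stable Dirichlet form. Specifically, testing with cutoff functions g_n yields c₃ n^{1-γ} ≤ c r n^{1-α} + c₄ β(r) n^{2(1-γ)} for all n, which forces c₃ ≤ cr for all r > 0, a contradiction. -/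
/-!
Test the inequality with the cutoffs `f_N x = min |x / N| 1`. They are `1/N`-Lipschitz and equal
to `1` off `(-N, N)`, so their `α`-stable energy is at most the integral of
`(𝟙_{(-N,N)}(x) + 𝟙_{(-N,N)}(y)) min (|(x-y)/N|², 1) |x-y|^{-1-α}`, which the substitution
`u = (x - y)/N` turns into `C N^{1-α}`. The same scaling gives `μ|f_N| = O(N^{1-γ})`, while
`μ(f_N²) ≥ μ(N, 2N] ≥ c N^{1-γ}`. Dividing by `N^{1-γ}` gives
`c ≤ r C N^{γ-α} + β(r) C' N^{1-γ}`; since `γ ≤ α`, letting `N → ∞` and then `r → 0` forces `c ≤ 0`.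
-/

open Real MeasureTheory Set Filter Topology

section Convolution

variable {G : Type*} [MeasurableSpace G] [AddGroup G] [MeasurableAdd₂ G] [MeasurableNeg G]
  {μ : Measure G} [SFinite μ] [μ.IsAddRightInvariant] {L : Type*} [RCLike L] {f g : G → L}

lemma integrable_mul_comp_sub_prod (hf : Integrable f μ) (hg : Integrable g μ) :
    Integrable (fun p : G × G => f p.1 * g (p.2 - p.1)) (μ.prod μ) :=
  ((measurePreserving_prod_sub μ μ).integrable_comp_emb
    (MeasurableEquiv.shearSubRight G).measurableEmbedding).2 (hf.mul_prod hg)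

lemma integral_mul_comp_sub_prod (f g : G → L) :
    ∫ p, f p.1 * g (p.2 - p.1) ∂(μ.prod μ) = (∫ x, f x ∂μ) * ∫ x, g x ∂μ := by
  rw [(measurePreserving_prod_sub μ μ).integral_comp
    (MeasurableEquiv.shearSubRight G).measurableEmbedding (fun p => f p.1 * g p.2),
    integral_prod_mul]

lemma integrable_symm_mul_comp_sub_prod (hf : Integrable f μ) (hg : Integrable g μ) :
    Integrable (fun p : G × G => f p.1 * g (p.2 - p.1) + f p.2 * g (p.1 - p.2)) (μ.prod μ) :=
  (integrable_mul_comp_sub_prod hf hg).add (integrable_mul_comp_sub_prod hf hg).swap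

lemma integral_symm_mul_comp_sub_prod (hf : Integrable f μ) (hg : Integrable g μ) :
    ∫ p, (f p.1 * g (p.2 - p.1) + f p.2 * g (p.1 - p.2)) ∂(μ.prod μ) =
      2 * ((∫ x, f x ∂μ) * ∫ x, g x ∂μ) := by
  have hswap : Integrable (fun p : G × G => f p.2 * g (p.1 - p.2)) (μ.prod μ) :=
    (integrable_mul_comp_sub_prod hf hg).swap
  have hswap_eq := integral_prod_swap (μ := μ) (ν := μ) fun p : G × G => f p.1 * g (p.2 - p.1)
  simp only [Prod.fst_swap, Prod.snd_swap] at hswap_eq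
  rw [integral_add (integrable_mul_comp_sub_prod hf hg) hswap, hswap_eq,
    integral_mul_comp_sub_prod, two_mul]

end Convolution

lemma integrable_comp_abs_of_integrableOn_Ioi {E : Type*} [NormedAddCommGroup E] {f : ℝ → E}
    (hf : IntegrableOn f (Ioi 0)) : Integrable fun x => f |x| := by
  have hpos : IntegrableOn (fun x => f |x|) (Ioi 0) :=
    hf.congr_fun (fun x hx => by rw [abs_of_pos (mem_Ioi.mp hx)]) measurableSet_Ioi
  have hneg : IntegrableOn (fun x => f |x|) (Iic 0) := by
    have hneg_emb : MeasurableEmbedding fun x : ℝ => -x :=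
      (Homeomorph.neg ℝ).measurableEmbedding
    rw [← Measure.map_neg_eq_self (volume : Measure ℝ), hneg_emb.integrableOn_map_iff]
    simp_rw [Function.comp_def, abs_neg, neg_preimage, neg_Iic, neg_zero]
    exact Iff.mpr integrableOn_Ici_iff_integrableOn_Ioi hpos
  simpa only [Iic_union_Ioi, integrableOn_univ] using hneg.union hpos

lemma integral_withDensity_ofReal {X : Type*} [MeasurableSpace X] {μ : Measure X} {d : X → ℝ}
    (hd : Measurable d) (hd_nonneg : ∀ x, 0 ≤ d x) (g : X → ℝ) :
    ∫ x, g x ∂μ.withDensity (fun x => ENNReal.ofReal (d x)) = ∫ x, d x * g x ∂μ := by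
  rw [integral_withDensity_eq_integral_toReal_smul hd.ennreal_ofReal
    (ae_of_all _ fun _ => ENNReal.ofReal_lt_top)]
  simp only [ENNReal.toReal_ofReal, hd_nonneg, smul_eq_mul]

section TruncKernel

noncomputable def truncKernel (p : ℕ) (s N u : ℝ) : ℝ := min (|u / N| ^ p) 1 * |u| ^ (-s)

variable {p : ℕ} {s N : ℝ}

lemma truncKernel_nonneg (u : ℝ) : 0 ≤ truncKernel p s N u :=
  mul_nonneg (le_min (by positivity) zero_le_one) (rpow_nonneg (abs_nonneg u) _)

lemma truncKernel_eq_rpow_mul_comp_div (hN : 0 < N) (u : ℝ) :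
    truncKernel p s N u = N ^ (-s) * truncKernel p s 1 (u / N) := by
  have hNs : N ^ (-s) ≠ 0 := (rpow_pos_of_pos hN _).ne'
  simp only [truncKernel, div_one, abs_div, abs_of_pos hN,
    div_rpow (abs_nonneg u) hN.le]
  field_simp

lemma integrable_truncKernel_one (hps : -1 < p - s) (hs : 1 < s) :
    Integrable (truncKernel p s 1) := by
  set k : ℝ → ℝ := fun t => min (t ^ p) 1 * t ^ (-s)
  have hnear : IntegrableOn k (Ioc 0 1) := by
    refine IntegrableOn.congr_fun (f := fun t : ℝ => t ^ ((p : ℝ) - s)) ?_ (fun t ht => ?_)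
      measurableSet_Ioc
    · rw [integrableOn_Ioc_iff_integrableOn_Ioo]
      exact (intervalIntegral.integrableOn_Ioo_rpow_iff one_pos).2 hps
    · simp only [k, min_eq_left (pow_le_one₀ ht.1.le ht.2), rpow_sub ht.1, rpow_neg ht.1.le,
        rpow_natCast, div_eq_mul_inv]
  have hfar : IntegrableOn k (Ioi 1) :=
    (integrableOn_Ioi_rpow_of_lt (a := -s) (by linarith) one_pos).congr_fun
      (fun t ht => by simp only [k, min_eq_right (one_le_pow₀ (mem_Ioi.mp ht).le), one_mul])
      measurableSet_Ioi
  have hk : IntegrableOn k (Ioi 0) := by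
    rw [← Ioc_union_Ioi_eq_Ioi zero_le_one]
    exact hnear.union hfar
  have hk_abs : truncKernel p s 1 = fun u => k |u| := by
    funext u; simp only [truncKernel, div_one, k]
  exact hk_abs ▸ integrable_comp_abs_of_integrableOn_Ioi hk

lemma integrable_truncKernel (hps : -1 < p - s) (hs : 1 < s) (hN : 0 < N) :
    Integrable (truncKernel p s N) :=
  (((integrable_truncKernel_one hps hs).comp_div hN.ne').const_mul (N ^ (-s))).congr
    (ae_of_all _ fun u => (truncKernel_eq_rpow_mul_comp_div hN u).symm)

lemma integral_truncKernel (hN : 0 < N) :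
    ∫ u, truncKernel p s N u = N ^ (1 - s) * ∫ u, truncKernel p s 1 u := by
  simp_rw [truncKernel_eq_rpow_mul_comp_div hN]
  rw [integral_const_mul, Measure.integral_comp_div, abs_of_pos hN, smul_eq_mul, ← mul_assoc,
    show 1 - s = -s + 1 by ring, rpow_add hN, rpow_one]

end TruncKernel

section Cutoff

/-- A piecewise linear stand-in for the paper's smooth cutoffs `g_n`. -/
noncomputable def cutoff (N x : ℝ) : ℝ := min |x / N| 1

variable {N : ℝ}

lemma cutoff_nonneg (x : ℝ) : 0 ≤ cutoff N x := le_min (abs_nonneg _) zero_le_one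

lemma cutoff_le_one (x : ℝ) : cutoff N x ≤ 1 := min_le_right _ _

lemma abs_cutoff (x : ℝ) : |cutoff N x| = cutoff N x := abs_of_nonneg (cutoff_nonneg x)

lemma continuous_cutoff : Continuous (cutoff N) := by
  unfold cutoff; fun_prop

lemma cutoff_eq_one (hN : 0 < N) {x : ℝ} (hx : N ≤ |x|) : cutoff N x = 1 :=
  min_eq_right <| by rwa [abs_div, abs_of_pos hN, one_le_div hN]

lemma abs_cutoff_sub_cutoff_le (x y : ℝ) : |cutoff N x - cutoff N y| ≤ |(x - y) / N| := by
  calc |cutoff N x - cutoff N y| ≤ max |(|x / N| - |y / N|)| |(1 : ℝ) - 1| :=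
        abs_min_sub_min_le_max _ _ _ _
    _ = |(|x / N| - |y / N|)| := by rw [sub_self, abs_zero, max_eq_left (abs_nonneg _)]
    _ ≤ |(x - y) / N| := by rw [sub_div]; exact abs_abs_sub_abs_le_abs_sub _ _

lemma memLp_cutoff {μ : Measure ℝ} [IsFiniteMeasure μ] (q : ENNReal) : MemLp (cutoff N) q μ :=
  MemLp.of_bound continuous_cutoff.aestronglyMeasurable 1
    (ae_of_all _ fun x => by rw [norm_eq_abs, abs_cutoff]; exact cutoff_le_one x)

lemma sq_cutoff_sub_cutoff_le (hN : 0 < N) (x y : ℝ) :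
    (cutoff N x - cutoff N y) ^ 2 ≤
      ((Ioo (-N) N).indicator 1 x + (Ioo (-N) N).indicator 1 y) * min (|(x - y) / N| ^ 2) 1 := by
  have hmin : 0 ≤ min (|(x - y) / N| ^ 2) 1 := le_min (by positivity) zero_le_one
  have hind : ∀ z, (0 : ℝ) ≤ (Ioo (-N) N).indicator 1 z := fun z =>
    indicator_nonneg (fun _ _ => zero_le_one) z
  by_cases hnear : x ∈ Ioo (-N) N ∨ y ∈ Ioo (-N) N
  · have hsum : 1 ≤ (Ioo (-N) N).indicator (1 : ℝ → ℝ) x + (Ioo (-N) N).indicator 1 y := by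
      rcases hnear with h | h
      · rw [indicator_of_mem h, Pi.one_apply]; linarith [hind y]
      · rw [indicator_of_mem h, Pi.one_apply]; linarith [hind x]
    have hdiff : (cutoff N x - cutoff N y) ^ 2 ≤ min (|(x - y) / N| ^ 2) 1 := by
      rw [← sq_abs]
      refine le_min (pow_le_pow_left₀ (abs_nonneg _) (abs_cutoff_sub_cutoff_le x y) 2) ?_
      exact pow_le_one₀ (abs_nonneg _) (abs_sub_le_of_nonneg_of_le (cutoff_nonneg x)
        (cutoff_le_one x) (cutoff_nonneg y) (cutoff_le_one y))
    exact hdiff.trans (le_mul_of_one_le_left hmin hsum)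
  · simp only [not_or, mem_Ioo, ← abs_lt, not_lt] at hnear
    rw [cutoff_eq_one hN hnear.1, cutoff_eq_one hN hnear.2, sub_self, sq, zero_mul]
    exact mul_nonneg (add_nonneg (hind x) (hind y)) hmin

end Cutoff

lemma integrable_indicator_one {X : Type*} [MeasurableSpace X] {μ : Measure X} {s : Set X}
    (hs : MeasurableSet s) (hμs : μ s ≠ ⊤) : Integrable (s.indicator (1 : X → ℝ)) μ :=
  (integrable_indicator_iff hs).2 (integrableOn_const hμs)

section Energy

variable {α N : ℝ}

lemma cutoff_energy_le (hN : 0 < N) (x y : ℝ) :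
    (cutoff N x - cutoff N y) ^ 2 * |x - y| ^ (-(1 + α)) ≤
      (Ioo (-N) N).indicator 1 x * truncKernel 2 (1 + α) N (y - x) +
        (Ioo (-N) N).indicator 1 y * truncKernel 2 (1 + α) N (x - y) := by
  have hsymm : truncKernel 2 (1 + α) N (y - x) = truncKernel 2 (1 + α) N (x - y) := by
    rw [truncKernel, truncKernel, ← neg_sub, neg_div, abs_neg, abs_neg]
  rw [hsymm, ← add_mul, truncKernel, ← mul_assoc]
  exact mul_le_mul_of_nonneg_right (sq_cutoff_sub_cutoff_le hN x y) (by positivity)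

lemma integrable_cutoff_energy_majorant (hα0 : 0 < α) (hα2 : α < 2) (hN : 0 < N) :
    Integrable fun p : ℝ × ℝ =>
      (Ioo (-N) N).indicator 1 p.1 * truncKernel 2 (1 + α) N (p.2 - p.1) +
        (Ioo (-N) N).indicator 1 p.2 * truncKernel 2 (1 + α) N (p.1 - p.2) := by
  rw [Measure.volume_eq_prod]
  exact integrable_symm_mul_comp_sub_prod
    (integrable_indicator_one measurableSet_Ioo measure_Ioo_lt_top.ne)
    (integrable_truncKernel (by push_cast; linarith) (by linarith) hN)

lemma integral_cutoff_energy_majorant (hα0 : 0 < α) (hα2 : α < 2) (hN : 0 < N) :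
    ∫ p : ℝ × ℝ, ((Ioo (-N) N).indicator 1 p.1 * truncKernel 2 (1 + α) N (p.2 - p.1) +
      (Ioo (-N) N).indicator 1 p.2 * truncKernel 2 (1 + α) N (p.1 - p.2)) =
        4 * (∫ u, truncKernel 2 (1 + α) 1 u) * N ^ (1 - α) := by
  rw [Measure.volume_eq_prod, integral_symm_mul_comp_sub_prod
    (integrable_indicator_one measurableSet_Ioo measure_Ioo_lt_top.ne)
    (integrable_truncKernel (by push_cast; linarith) (by linarith) hN),
    integral_indicator_one measurableSet_Ioo, volume_real_Ioo_of_le (by linarith),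
    integral_truncKernel hN, show (1 : ℝ) - (1 + α) = -α by ring,
    show (1 : ℝ) - α = 1 + -α by ring, rpow_add hN, rpow_one]
  ring

lemma integrable_cutoff_energy (hα0 : 0 < α) (hα2 : α < 2) (hN : 0 < N) :
    Integrable fun p : ℝ × ℝ => (cutoff N p.1 - cutoff N p.2) ^ 2 * |p.1 - p.2| ^ (-(1 + α)) :=
  (integrable_cutoff_energy_majorant hα0 hα2 hN).mono' (by unfold cutoff; fun_prop)
    (ae_of_all _ fun p => by
      rw [norm_of_nonneg (by positivity)]
      exact cutoff_energy_le hN p.1 p.2)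

lemma integral_cutoff_energy_le (hα0 : 0 < α) (hα2 : α < 2) (hN : 0 < N) :
    ∫ p : ℝ × ℝ, (cutoff N p.1 - cutoff N p.2) ^ 2 * |p.1 - p.2| ^ (-(1 + α)) ≤
      4 * (∫ u, truncKernel 2 (1 + α) 1 u) * N ^ (1 - α) := by
  rw [← integral_cutoff_energy_majorant hα0 hα2 hN]
  exact integral_mono_of_nonneg (ae_of_all _ fun _ => by positivity)
    (integrable_cutoff_energy_majorant hα0 hα2 hN)
    (ae_of_all _ fun p => cutoff_energy_le hN p.1 p.2)

end Energy

section PowerLaw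

variable {γ N : ℝ}

lemma integral_powerLaw {Cγ : ℝ} (hCγ : 0 ≤ Cγ) (g : ℝ → ℝ) :
    ∫ x, g x ∂(volume.withDensity fun x => ENNReal.ofReal (Cγ * (1 + |x|) ^ (-γ))) =
      Cγ * ∫ x, (1 + |x|) ^ (-γ) * g x := by
  rw [integral_withDensity_ofReal (by fun_prop) (fun x => mul_nonneg hCγ (by positivity)),
    ← integral_const_mul]
  simp_rw [mul_assoc]

lemma integral_powerLaw_mul_cutoff_le (hγ1 : 1 < γ) (hγ2 : γ < 2) (hN : 0 < N) :
    ∫ x, (1 + |x|) ^ (-γ) * cutoff N x ≤ (∫ u, truncKernel 1 γ 1 u) * N ^ (1 - γ) := by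
  rw [mul_comm, ← integral_truncKernel hN]
  refine integral_mono_of_nonneg
    (ae_of_all _ fun x => mul_nonneg (by positivity) (cutoff_nonneg x))
    (integrable_truncKernel (by push_cast; linarith) hγ1 hN) (ae_of_all _ fun x => ?_)
  rcases eq_or_ne x 0 with rfl | hx
  · simp [cutoff, truncKernel]
  calc (1 + |x|) ^ (-γ) * cutoff N x ≤ |x| ^ (-γ) * cutoff N x :=
        mul_le_mul_of_nonneg_right (rpow_le_rpow_of_nonpos (abs_pos.2 hx)
          (le_add_of_nonneg_left zero_le_one) (by linarith)) (cutoff_nonneg x)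
    _ = truncKernel 1 γ N x := by rw [truncKernel, pow_one, mul_comm, cutoff]

lemma le_integral_powerLaw_mul_sq_cutoff (hγ : 1 < γ) (hN : 1 ≤ N) :
    3 ^ (-γ) * N ^ (1 - γ) ≤ ∫ x, (1 + |x|) ^ (-γ) * cutoff N x ^ 2 := by
  have hN0 : 0 < N := by linarith
  have hint : Integrable fun x : ℝ => (1 + |x|) ^ (-γ) * cutoff N x ^ 2 := by
    refine (integrable_one_add_norm (E := ℝ) (μ := volume) (r := γ) (by simpa using hγ)).mono'
      (by unfold cutoff; fun_prop) (ae_of_all _ fun x => ?_)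
    rw [norm_of_nonneg (by positivity), norm_eq_abs]
    exact mul_le_of_le_one_right (by positivity)
      (pow_le_one₀ (cutoff_nonneg x) (cutoff_le_one x))
  calc 3 ^ (-γ) * N ^ (1 - γ) = ∫ _ in Ioc N (2 * N), (3 * N) ^ (-γ) := by
        rw [setIntegral_const, volume_real_Ioc_of_le (by linarith), smul_eq_mul,
          mul_rpow (by norm_num) hN0.le, show 1 - γ = -γ + 1 by ring, rpow_add hN0, rpow_one]
        ring
    _ ≤ ∫ x in Ioc N (2 * N), (1 + |x|) ^ (-γ) * cutoff N x ^ 2 := by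
        refine setIntegral_mono_on (integrableOn_const measure_Ioc_lt_top.ne) hint.integrableOn
          measurableSet_Ioc fun x hx => ?_
        have hx0 : 0 < x := hN0.trans hx.1
        rw [cutoff_eq_one hN0 (by rw [abs_of_pos hx0]; exact hx.1.le), one_pow, mul_one]
        exact rpow_le_rpow_of_nonpos (by positivity) (by rw [abs_of_pos hx0]; linarith [hx.2])
          (by linarith)
    _ ≤ ∫ x, (1 + |x|) ^ (-γ) * cutoff N x ^ 2 :=
        setIntegral_le_integral hint (ae_of_all _ fun x => by positivity)

end PowerLaw

lemma nonpos_of_forall_le_rpow (b : ℝ → ℝ) {c K C α γ : ℝ} (hγ : 1 < γ) (hγα : γ ≤ α)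
    (hK : 0 ≤ K) (h : ∀ r > 0, ∀ N : ℝ, 1 ≤ N →
      c * N ^ (1 - γ) ≤ r * K * N ^ (1 - α) + b r * (C * N ^ (1 - γ)) ^ 2) :
    c ≤ 0 := by
  have hr : ∀ r > 0, c ≤ r * K := by
    intro r hr
    have hdecay :
        Tendsto (fun N : ℝ => r * K + b r * C ^ 2 * N ^ (1 - γ)) atTop (𝓝 (r * K)) := by
      have := (tendsto_rpow_neg_atTop (y := γ - 1) (by linarith)).const_mul (b r * C ^ 2)
      simpa only [neg_sub, mul_zero, add_zero] using this.const_add (r * K)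
    refine ge_of_tendsto hdecay ?_
    filter_upwards [eventually_ge_atTop 1] with N hN
    have hP : 0 < N ^ (1 - γ) := rpow_pos_of_pos (by linarith) _
    have hα : N ^ (1 - α) ≤ N ^ (1 - γ) := rpow_le_rpow_of_exponent_le hN (by linarith)
    refine le_of_mul_le_mul_right ?_ hP
    calc c * N ^ (1 - γ) ≤ r * K * N ^ (1 - α) + b r * (C * N ^ (1 - γ)) ^ 2 := h r hr N hN
      _ ≤ r * K * N ^ (1 - γ) + b r * (C * N ^ (1 - γ)) ^ 2 := by gcongr
      _ = (r * K + b r * C ^ 2 * N ^ (1 - γ)) * N ^ (1 - γ) := by ring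
  have hlim : Tendsto (fun r : ℝ => r * K) (𝓝[>] 0) (𝓝 0) := by
    simpa only [zero_mul] using
      ((continuous_mul_const K).tendsto' 0 0 (zero_mul K)).mono_left nhdsWithin_le_nhds
  exact ge_of_tendsto hlim (eventually_nhdsWithin_of_forall hr)

/-- For `α ∈ (1,2)`, `γ ∈ (1,α]` and `μ(dx) = C_γ (1+|x|)^{-γ} dx` a probability
measure on `ℝ`, there is no decreasing function `β : (0,∞) → (0,∞)` such that the
super Poincaré inequality `μ(f²) ≤ r E(f,f) + β(r) μ(|f|)²` holds for all
`r > 0` and all `f` in the form domain (i.e. `f ∈ L²(μ)` with finite `α`-stable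
energy). -/
theorem stmt15 (α γ Cγ Cα : ℝ) (hα : α ∈ Set.Ioo (1 : ℝ) 2)
    (hγ : γ ∈ Set.Ioc (1 : ℝ) α) (hCγ : 0 < Cγ) (hCα : 0 < Cα)
    (μ : Measure ℝ)
    (hμ : μ = volume.withDensity fun x => ENNReal.ofReal (Cγ * (1 + |x|) ^ (-γ)))
    (hprob : IsProbabilityMeasure μ) :
    ¬ ∃ β : ℝ → ℝ, (∀ r > (0 : ℝ), 0 < β r) ∧
      (∀ r s : ℝ, 0 < r → r ≤ s → β s ≤ β r) ∧
      ∀ r > (0 : ℝ), ∀ f : ℝ → ℝ, MemLp f 2 μ →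
        Integrable (fun p : ℝ × ℝ => (f p.1 - f p.2) ^ 2 * |p.1 - p.2| ^ (-(1 + α))) →
        ∫ x, f x ^ 2 ∂μ ≤
          r * ((Cα / 2) * ∫ p : ℝ × ℝ, (f p.1 - f p.2) ^ 2 * |p.1 - p.2| ^ (-(1 + α))) +
            β r * (∫ x, |f x| ∂μ) ^ 2 := by
  obtain ⟨hα1, hα2⟩ := hα
  obtain ⟨hγ1, hγα⟩ := hγ
  rintro ⟨β, hβ_pos, -, hSP⟩
  subst hμ
  set E := ∫ u, truncKernel 2 (1 + α) 1 u
  set T := ∫ u, truncKernel 1 γ 1 u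
  have hE : 0 ≤ E := integral_nonneg truncKernel_nonneg
  refine (mul_pos hCγ (rpow_pos_of_pos three_pos (-γ))).not_ge <| nonpos_of_forall_le_rpow β
    (K := Cα / 2 * (4 * E)) (C := Cγ * T) hγ1 hγα (by positivity) fun r hr N hN => ?_
  have hN0 : 0 < N := by linarith
  have hβr := (hβ_pos r hr).le
  calc Cγ * 3 ^ (-γ) * N ^ (1 - γ) ≤ ∫ x, cutoff N x ^ 2 ∂_ := by
        rw [integral_powerLaw hCγ.le, mul_assoc]
        exact mul_le_mul_of_nonneg_left (le_integral_powerLaw_mul_sq_cutoff hγ1 hN) hCγ.le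
    _ ≤ _ := hSP r hr _ (memLp_cutoff 2) (integrable_cutoff_energy (by linarith) hα2 hN0)
    _ ≤ r * (Cα / 2 * (4 * E * N ^ (1 - α))) + β r * (Cγ * (T * N ^ (1 - γ))) ^ 2 := by
        simp only [abs_cutoff, integral_powerLaw hCγ.le]
        gcongr
        · exact integral_cutoff_energy_le (by linarith) hα2 hN0
        · exact mul_nonneg hCγ.le
            (integral_nonneg fun x => mul_nonneg (by positivity) (cutoff_nonneg x))
        · exact integral_powerLaw_mul_cutoff_le hγ1 (by linarith) hN0
    _ = r * (Cα / 2 * (4 * E)) * N ^ (1 - α) + β r * (Cγ * T * N ^ (1 - γ)) ^ 2 := by ring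
end
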